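/- Let f(x) = −β sin(x) + c with β > 0 and |c| ≤ β sin(γ) for some γ ∈ [0, π/2). Then x̄ = arcsin(c/β) is the unique equilibrium of ẋ = f(x) in [−γ, γ], and the function V(x) = (x − x̄)² satisfies V̇(x) = 2(x − x̄)f(x) ≤ −2β cos(γ) V(x) for all x ∈ [−γ, γ]. -/

import Mathlib

/-!
On `[-γ, γ]` with `γ < π/2` the sine is a bijection onto `[-sin γ, sin γ]` and its slope is at
least `cos γ`. Writing `f x = β (sin x̄ - sin x)`, the first fact gives existence and uniqueness of
the zero `x̄`, and the second gives `(x - x̄)(sin x - sin x̄) ≥ cos γ (x - x̄)²`, which is the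
Lyapunov estimate after multiplying by `-2β`.
-/

open Real Set

namespace Real

theorem arcsin_mem_Icc_of_abs_le_sin {t γ : ℝ} (hγ : γ ∈ Ico (-(π / 2)) (π / 2))
    (ht : |t| ≤ sin γ) : arcsin t ∈ Icc (-γ) γ := by
  obtain ⟨ht₁, ht₂⟩ := abs_le.mp ht
  refine ⟨(le_arcsin_iff_sin_le' ⟨by linarith [hγ.2], by linarith [hγ.1]⟩).mpr ?_,
    (arcsin_le_iff_le_sin' hγ).mpr ht₂⟩
  rwa [sin_neg]

theorem cos_le_cos_of_mem_Icc {γ x : ℝ} (hγ : γ ≤ π) (hx : x ∈ Icc (-γ) γ) : cos γ ≤ cos x := by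
  rw [← cos_abs x]
  exact cos_le_cos_of_nonneg_of_le_pi (abs_nonneg x) hγ (abs_le.mpr hx)

theorem cos_mul_sub_le_sin_sub {γ a b : ℝ} (hγ : γ ≤ π) (ha : a ∈ Icc (-γ) γ)
    (hb : b ∈ Icc (-γ) γ) (hab : a ≤ b) : cos γ * (b - a) ≤ sin b - sin a := by
  refine (convex_Icc _ _).mul_sub_le_image_sub_of_le_deriv continuousOn_sin
    differentiable_sin.differentiableOn (fun x hx => ?_) a ha b hb hab
  rw [interior_Icc] at hx
  rw [deriv_sin]
  exact cos_le_cos_of_mem_Icc hγ (Ioo_subset_Icc_self hx)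

theorem cos_mul_sq_sub_le_mul_sin_sub {γ x y : ℝ} (hγ : γ ≤ π) (hx : x ∈ Icc (-γ) γ)
    (hy : y ∈ Icc (-γ) γ) : cos γ * (x - y) ^ 2 ≤ (x - y) * (sin x - sin y) := by
  rcases le_total y x with hyx | hxy
  · have h := cos_mul_sub_le_sin_sub hγ hy hx hyx
    nlinarith
  · have h := cos_mul_sub_le_sin_sub hγ hx hy hxy
    nlinarith

end Real

/-- For `f(x) = −β sin x + c` with `β > 0` and `|c| ≤ β sin γ`, `γ ∈ [0, π/2)`:
`x̄ = arcsin(c/β)` is the unique equilibrium in `[−γ, γ]`, and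
`V(x) = (x − x̄)²` satisfies `2(x − x̄) f(x) ≤ −2 β cos γ · V(x)` on `[−γ, γ]`. -/
theorem scalar_equilibrium_and_lyapunov
    (β γ c : ℝ) (hβ : 0 < β) (hγ : γ ∈ Set.Ico 0 (Real.pi / 2))
    (hc : |c| ≤ β * Real.sin γ) :
    let f : ℝ → ℝ := fun x => -β * Real.sin x + c
    let xbar := Real.arcsin (c / β)
    xbar ∈ Set.Icc (-γ) γ ∧
    f xbar = 0 ∧
    (∀ x ∈ Set.Icc (-γ) γ, f x = 0 → x = xbar) ∧
    (∀ x ∈ Set.Icc (-γ) γ,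
      2 * (x - xbar) * f x ≤ -2 * β * Real.cos γ * (x - xbar) ^ 2) := by
  intro f xbar
  obtain ⟨hγ₀, hγ₁⟩ := hγ
  have hγπ : γ ≤ π := by linarith [pi_pos]
  have hcβ : |c / β| ≤ sin γ := by
    rwa [abs_div, abs_of_pos hβ, div_le_iff₀ hβ, mul_comm]
  have hxbar : xbar ∈ Icc (-γ) γ :=
    arcsin_mem_Icc_of_abs_le_sin ⟨by linarith, hγ₁⟩ hcβ
  have hsin : sin xbar = c / β :=
    sin_arcsin (by linarith [neg_abs_le (c / β), sin_le_one γ])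
      (by linarith [le_abs_self (c / β), sin_le_one γ])
  have hf : ∀ x, f x = β * (sin xbar - sin x) := fun x => by
    simp only [f, hsin]
    field_simp
    ring
  have hIcc : Icc (-γ) γ ⊆ Icc (-(π / 2)) (π / 2) := Icc_subset_Icc (by linarith) hγ₁.le
  refine ⟨hxbar, by rw [hf, sub_self, mul_zero], fun x hx hfx => ?_, fun x hx => ?_⟩
  · rw [hf, mul_eq_zero, sub_eq_zero] at hfx
    exact injOn_sin (hIcc hx) (hIcc hxbar) (hfx.resolve_left hβ.ne').symm
  · have key := cos_mul_sq_sub_le_mul_sin_sub hγπ hx hxbar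
    rw [hf]
    nlinarith
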